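/- arXiv:2312.14379 — 4 statements merged into one kernel-verified Lean document; each statement's English description precedes it below -/
import Mathlib

section
/- Let (T, n) be a Noetherian local ring, x = x₁, ..., x_ℓ a regular sequence on T, and a = a₁, ..., a_ℓ a sequence of elements of T. Let ∂₁^K : T^ℓ → T and ∂₁^L : T^ℓ → T be the first Koszul differentials sending the i-th basis vector to x_i and a_i respectively. Then ∂₁^L(Ker ∂₁^K) equals the ideal I₂ of T generated by all 2×2 minors a_i x_j − a_j x_i of the 2×ℓ matrix with rows (a₁,...,a_ℓ) and (x₁,...,x_ℓ). -/
/-!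
If `∑ cᵢ xᵢ = 0`, regularity of `x_ℓ` modulo `(x₁, …, x_{ℓ-1})` gives `c_ℓ = ∑_{j<ℓ} dⱼ xⱼ`.
Then `c'ⱼ = cⱼ + dⱼ x_ℓ` is a relation on `x₁, …, x_{ℓ-1}` and
`∑ cᵢ aᵢ = ∑ c'ⱼ aⱼ + ∑ dⱼ (a_ℓ xⱼ - aⱼ x_ℓ)`, so induction on `ℓ` puts `∂₁^L(Ker ∂₁^K)` inside `I₂`.
Conversely each minor `aᵢ xⱼ - aⱼ xᵢ` is the image of the Koszul syzygy `xⱼ eᵢ - xᵢ eⱼ`.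
-/

open RingTheory.Sequence

section

variable {R : Type*} [CommRing R] {n : ℕ}

def twoMinorsIdeal (a x : Fin n → R) : Ideal R :=
  Ideal.span {z | ∃ i j : Fin n, z = a i * x j - a j * x i}

lemma minor_mem_twoMinorsIdeal (a x : Fin n → R) (i j : Fin n) :
    a i * x j - a j * x i ∈ twoMinorsIdeal a x :=
  Ideal.subset_span ⟨i, j, rfl⟩

lemma twoMinorsIdeal_castSucc_le (a x : Fin (n + 1) → R) :
    twoMinorsIdeal (fun i ↦ a i.castSucc) (fun i ↦ x i.castSucc) ≤ twoMinorsIdeal a x :=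
  Ideal.span_le.mpr <| by
    rintro _ ⟨i, j, rfl⟩
    exact minor_mem_twoMinorsIdeal a x _ _

lemma Ideal.ofList_ofFn (x : Fin n → R) : Ideal.ofList (List.ofFn x) = Ideal.span (Set.range x) :=
  congrArg Ideal.span <| Set.ext fun r ↦ List.mem_ofFn' x r

lemma exists_last_eq_sum_mul {x c : Fin (n + 1) → R}
    (hreg : IsSMulRegular (R ⧸ Ideal.span (Set.range fun j : Fin n ↦ x j.castSucc))
      (x (Fin.last n)))
    (hc : ∑ i, c i * x i = 0) :
    ∃ d : Fin n → R, c (Fin.last n) = ∑ j, d j * x j.castSucc := by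
  rw [Fin.sum_univ_castSucc, add_eq_zero_iff_eq_neg'] at hc
  have hmem : x (Fin.last n) • c (Fin.last n) ∈
      Ideal.span (Set.range fun j : Fin n ↦ x j.castSucc) := by
    rw [smul_eq_mul, mul_comm, hc]
    exact neg_mem <| Ideal.sum_mem _ fun j _ ↦ Ideal.mul_mem_left _ _ (Ideal.subset_span ⟨j, rfl⟩)
  simpa [Submodule.mem_span_range_iff_exists_fun, eq_comm] using
    mem_of_isSMulRegular_quotient_of_smul_mem hreg hmem

theorem sum_mul_mem_twoMinorsIdeal {x : Fin n → R} (hx : IsWeaklyRegular R (List.ofFn x))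
    (a : Fin n → R) {c : Fin n → R} (hc : ∑ i, c i * x i = 0) :
    ∑ i, c i * a i ∈ twoMinorsIdeal a x := by
  induction n with
  | zero => simp
  | succ n ih =>
    rw [List.ofFn_succ', List.concat_eq_append, isWeaklyRegular_append_iff,
      isWeaklyRegular_singleton_iff, Ideal.smul_eq_mul, Ideal.mul_top, Ideal.ofList_ofFn] at hx
    obtain ⟨hinit, hlast⟩ := hx
    obtain ⟨d, hd⟩ := exists_last_eq_sum_mul hlast hc
    set c' : Fin n → R := fun j ↦ c j.castSucc + d j * x (Fin.last n)
    have hc' : ∑ j, c' j * x j.castSucc = 0 := by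
      rw [Fin.sum_univ_castSucc, hd] at hc
      rw [← hc, Finset.sum_mul, ← Finset.sum_add_distrib]
      exact Finset.sum_congr rfl fun j _ ↦ by ring
    have hsplit : ∑ i, c i * a i = ∑ j, c' j * a j.castSucc +
        ∑ j, d j * (a (Fin.last n) * x j.castSucc - a j.castSucc * x (Fin.last n)) := by
      rw [Fin.sum_univ_castSucc, hd, Finset.sum_mul, ← Finset.sum_add_distrib,
        ← Finset.sum_add_distrib]
      exact Finset.sum_congr rfl fun j _ ↦ by ring
    rw [hsplit]
    exact add_mem (twoMinorsIdeal_castSucc_le a x (ih hinit _ hc')) <|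
      Ideal.sum_mem _ fun j _ ↦ Ideal.mul_mem_left _ _ (minor_mem_twoMinorsIdeal a x _ _)

lemma minor_mem_map_ker_linearCombination (a x : Fin n → R) (i j : Fin n) :
    a i * x j - a j * x i ∈
      (LinearMap.ker (Fintype.linearCombination R x)).map (Fintype.linearCombination R a) := by
  refine ⟨Pi.single i (x j) - Pi.single j (x i), ?_, ?_⟩ <;>
    simp [Fintype.linearCombination_apply_single, mul_comm]

theorem map_ker_linearCombination_eq_twoMinorsIdeal {x : Fin n → R}
    (hx : IsWeaklyRegular R (List.ofFn x)) (a : Fin n → R) :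
    (LinearMap.ker (Fintype.linearCombination R x)).map (Fintype.linearCombination R a) =
      twoMinorsIdeal a x := by
  refine le_antisymm ?_ (Ideal.span_le.mpr ?_)
  · rintro _ ⟨c, hc, rfl⟩
    simp only [SetLike.mem_coe, LinearMap.mem_ker, Fintype.linearCombination_apply,
      smul_eq_mul] at hc ⊢
    exact sum_mul_mem_twoMinorsIdeal hx a hc
  · rintro _ ⟨i, j, rfl⟩
    exact minor_mem_map_ker_linearCombination a x i j

end

theorem koszul_kernel_image_eq_minors_general
    (T : Type*) [CommRing T]
    (ℓ : ℕ) (x a : Fin ℓ → T)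
    (hreg : RingTheory.Sequence.IsRegular T (List.ofFn x)) :
    ∀ y : T,
      (∃ c : Fin ℓ → T, (∑ i, c i * x i = 0) ∧ y = ∑ i, c i * a i) ↔
        y ∈ Ideal.span { z | ∃ i j : Fin ℓ, z = a i * x j - a j * x i } := by
  intro y
  rw [← twoMinorsIdeal, ← map_ker_linearCombination_eq_twoMinorsIdeal hreg.toIsWeaklyRegular]
  simp only [Submodule.mem_map, LinearMap.mem_ker, Fintype.linearCombination_apply, smul_eq_mul,
    eq_comm (a := y)]

/-- For a regular sequence `x₁,…,x_ℓ` on a Noetherian local ring `T` and any sequence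
`a₁,…,a_ℓ`, the image under the Koszul differential `e_i ↦ a_i` of the kernel of the
Koszul differential `e_i ↦ x_i` is the ideal of 2×2 minors `I₂` of the matrix with
rows `(a₁,…,a_ℓ)` and `(x₁,…,x_ℓ)`. -/
theorem koszul_kernel_image_eq_minors
    (T : Type*) [CommRing T] [IsNoetherianRing T] [IsLocalRing T]
    (ℓ : ℕ) (x a : Fin ℓ → T)
    (hreg : RingTheory.Sequence.IsRegular T (List.ofFn x)) :
    ∀ y : T,
      (∃ c : Fin ℓ → T, (∑ i, c i * x i = 0) ∧ y = ∑ i, c i * a i) ↔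
        y ∈ Ideal.span { z | ∃ i j : Fin ℓ, z = a i * x j - a j * x i } :=
  koszul_kernel_image_eq_minors_general T ℓ x a hreg
end

section
/- Let (R, m) be a one-dimensional Cohen-Macaulay local ring with a fractional canonical ideal K (an R-submodule of Q(R) with R ⊆ K ⊆ \bar{R} and K ≅ K_R). Suppose r(R) = 2 and write K = R + Rf. Then K² = K³ if and only if K/R ≅ R/𝔠 as R-modules, where 𝔠 = R : R[K]. -/
/-!
`K : K = R` turns colons into `K`-colons, `R : A = K : KA`, and since `K : (K : F) = F` for
finitely generated `F ⊇ R`, the colon `R : A` determines `KA`. The ring `R[K]` is module-finite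
(`K` is finite and integral) with `K R[K] = R[K]`, so `𝔠 = R : R[K]` equals `R : K` iff
`K² = R[K]`, i.e. iff `K² = K³`. On the other side `K/R` is cyclic, generated by `f`, with
annihilator `R : K`, and `R/I ≅ R/J` forces `I = J` by comparing annihilators.
-/

open IsLocalRing

/-- The length of a module, as the Krull dimension of its submodule lattice. -/
noncomputable def moduleLength (R M : Type*) [Ring R] [AddCommGroup M] [Module R M] : ℕ∞ :=
  WithBot.unbotD 0 (Order.krullDim (Submodule R M))

/-- `K` is a fractional canonical ideal of `R` (inside a total quotient ring `Q`):
`R ⊆ K ⊆ \bar R` and `K ≅ K_R`, the latter expressed through the Herzog–Kunz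
double-annihilator characterization of canonical fractional ideals. -/
def IsFracCanonical (R Q : Type*) [CommRing R] [CommRing Q] [Algebra R Q]
    (K : Submodule R Q) : Prop :=
  K.FG ∧ (1 : Submodule R Q) ≤ K ∧
    K ≤ Subalgebra.toSubmodule (integralClosure R Q) ∧
    ∀ F : Submodule R Q, F.FG → (1 : Submodule R Q) ≤ F → K / (K / F) = F

/-- The conductor ideal `𝔠 = R : R[K]` of `R`. -/
noncomputable def condIdeal (R Q : Type*) [CommRing R] [CommRing Q] [Algebra R Q]
    (K : Submodule R Q) : Ideal R :=
  Submodule.comap (Algebra.linearMap R Q)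
    ((1 : Submodule R Q) / (Subalgebra.toSubmodule (Algebra.adjoin R (K : Set Q))))

namespace Submodule

section Semiring

variable {R A : Type*} [CommSemiring R] [CommSemiring A] [Algebra R A] {K : Submodule R A}

theorem div_one_eq (I : Submodule R A) : I / 1 = I :=
  eq_of_forall_le_iff fun X => by rw [le_div_iff_mul_le, mul_one]

theorem div_mul_eq_div_div (I J L : Submodule R A) : I / (J * L) = I / J / L :=
  eq_of_forall_le_iff fun X => by
    rw [le_div_iff_mul_le, le_div_iff_mul_le, le_div_iff_mul_le, ← mul_assoc, mul_right_comm]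

theorem one_div_le_one {I : Submodule R A} (h : 1 ≤ I) : 1 / I ≤ 1 :=
  (le_mul_of_one_le_right' h).trans (le_div_iff_mul_le.mp le_rfl)

theorem pow_le_toSubmodule_adjoin (n : ℕ) :
    K ^ n ≤ Subalgebra.toSubmodule (Algebra.adjoin R (K : Set A)) := by
  induction n with
  | zero => exact one_le.mpr (Subalgebra.one_mem _)
  | succ n ih =>
    calc K ^ (n + 1) = K ^ n * K := pow_succ K n
      _ ≤ _ * _ := mul_le_mul' ih (by simpa using Algebra.span_le_adjoin R (K : Set A))
      _ = _ := (Subalgebra.isIdempotentElem_toSubmodule _).eq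

theorem mul_toSubmodule_adjoin (h : 1 ≤ K) :
    K * Subalgebra.toSubmodule (Algebra.adjoin R (K : Set A)) =
      Subalgebra.toSubmodule (Algebra.adjoin R (K : Set A)) :=
  le_antisymm
    ((mul_le_mul' (by simpa using pow_le_toSubmodule_adjoin (K := K) 1) le_rfl).trans_eq
      (Subalgebra.isIdempotentElem_toSubmodule _).eq)
    (le_mul_of_one_le_left' h)

theorem sq_eq_pow_three_iff_sq_eq_adjoin (h : 1 ≤ K) :
    K ^ 2 = K ^ 3 ↔ K ^ 2 = Subalgebra.toSubmodule (Algebra.adjoin R (K : Set A)) := by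
  constructor
  · intro h23
    have h4 : K ^ 2 * K ^ 2 = K ^ 2 := by
      rw [← pow_add, pow_succ, ← h23, ← pow_succ, ← h23]
    let S := (K ^ 2).toSubalgebra (one_le.mp (one_le_pow_of_one_le' h 2))
      fun _ _ hx hy => h4 ▸ mul_mem_mul hx hy
    refine le_antisymm (pow_le_toSubmodule_adjoin 2) fun x hx => ?_
    refine Algebra.adjoin_le (S := S) (fun y hy => ?_) hx
    exact pow_le_pow_right' h one_le_two (by simpa using hy)
  · intro hB
    rw [pow_succ K 2, hB, mul_comm, mul_toSubmodule_adjoin h]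

end Semiring

section Ring

variable {R A : Type*} [CommRing R] [CommRing A] [Algebra R A]

theorem fg_toSubmodule_adjoin {K : Submodule R A} (hK : K.FG)
    (hint : K ≤ Subalgebra.toSubmodule (integralClosure R A)) :
    (Subalgebra.toSubmodule (Algebra.adjoin R (K : Set A))).FG := by
  obtain ⟨s, rfl⟩ := hK
  rw [Algebra.adjoin_span]
  exact fg_adjoin_of_finite s.finite_toSet fun x hx => hint (subset_span hx)

theorem comap_algebraLinearMap_inj {S T : Submodule R A} (hS : S ≤ 1) (hT : T ≤ 1) :
    comap (Algebra.linearMap R A) S = comap (Algebra.linearMap R A) T ↔ S = T := by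
  refine ⟨fun h => ?_, congrArg _⟩
  have map_comap : ∀ U : Submodule R A, U ≤ 1 →
      map (Algebra.linearMap R A) (comap (Algebra.linearMap R A) U) = U := fun U hU => by
    rw [map_comap_eq, ← one_eq_range, inf_eq_right.mpr hU]
  rw [← map_comap S hS, ← map_comap T hT, h]

theorem nonempty_quotient_equiv_of_eq_sup_span_singleton {N K : Submodule R A} {f : A}
    (hK : K = N ⊔ span R {f}) :
    Nonempty ((K ⧸ comap K.subtype N) ≃ₗ[R] R ⧸ comap (Algebra.linearMap R A) (N / K)) := by
  have hfK : f ∈ K := hK ▸ mem_sup_right (mem_span_singleton_self f)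
  let g := (comap K.subtype N).mkQ ∘ₗ LinearMap.toSpanSingleton R K ⟨f, hfK⟩
  have hg : ∀ a : R, g a = 0 ↔ a • f ∈ N := fun a => by
    simp [g]
  have hsurj : Function.Surjective g := by
    rintro ⟨k⟩
    obtain ⟨n, hn, _, hv, hnv⟩ := mem_sup.mp (show (k : A) ∈ N ⊔ span R {f} from hK ▸ k.2)
    obtain ⟨a, rfl⟩ := mem_span_singleton.mp hv
    refine ⟨a, (Quotient.eq _).mpr ?_⟩
    simpa [← hnv] using neg_mem hn
  have hker : LinearMap.ker g = comap (Algebra.linearMap R A) (N / K) := by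
    ext a
    rw [LinearMap.mem_ker, hg, mem_comap, mem_div_iff_forall_mul_mem]
    simp only [Algebra.linearMap_apply, ← Algebra.smul_def]
    refine ⟨fun h y hy => ?_, fun h => h f hfK⟩
    rw [hK] at hy
    obtain ⟨n, hn, _, hv, rfl⟩ := mem_sup.mp hy
    obtain ⟨b, rfl⟩ := mem_span_singleton.mp hv
    rw [smul_add, smul_comm]
    exact add_mem (smul_mem _ a hn) (smul_mem _ b h)
  exact ⟨(g.quotKerEquivOfSurjective hsurj).symm.trans (quotEquivOfEq _ _ hker)⟩

end Ring

end Submodule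

theorem Ideal.nonempty_quotient_linearEquiv_iff {R : Type*} [CommRing R] {I J : Ideal R} :
    Nonempty ((R ⧸ I) ≃ₗ[R] R ⧸ J) ↔ I = J :=
  ⟨fun ⟨e⟩ => by simpa only [Ideal.annihilator_quotient] using e.annihilator_eq,
    fun h => h ▸ ⟨LinearEquiv.refl R _⟩⟩

namespace IsFracCanonical

variable {R Q : Type*} [CommRing R] [CommRing Q] [Algebra R Q] {K : Submodule R Q}

theorem div_self (hK : IsFracCanonical R Q K) : K / K = 1 := by
  have fg_one : (1 : Submodule R Q).FG := by
    rw [Submodule.one_eq_span]; exact Submodule.fg_span_singleton 1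
  simpa only [Submodule.div_one_eq] using hK.2.2.2 1 fg_one le_rfl

theorem one_div_eq_div_mul (hK : IsFracCanonical R Q K) (A : Submodule R Q) :
    1 / A = K / (K * A) := by
  rw [Submodule.div_mul_eq_div_div, hK.div_self]

theorem div_one_div (hK : IsFracCanonical R Q K) {A : Submodule R Q} (hA : A.FG) (h1A : 1 ≤ A) :
    K / (1 / A) = K * A := by
  rw [hK.one_div_eq_div_mul]
  exact hK.2.2.2 _ (hK.1.mul hA) (one_le_mul hK.2.1 h1A)

theorem one_div_eq_one_div_iff (hK : IsFracCanonical R Q K) {A B : Submodule R Q}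
    (hA : A.FG) (h1A : 1 ≤ A) (hB : B.FG) (h1B : 1 ≤ B) :
    1 / A = 1 / B ↔ K * A = K * B :=
  ⟨fun h => by rw [← hK.div_one_div hA h1A, h, hK.div_one_div hB h1B],
    fun h => by rw [hK.one_div_eq_div_mul, h, ← hK.one_div_eq_div_mul]⟩

end IsFracCanonical


theorem type_two_square_eq_cube_iff_general
    (R : Type*) [CommRing R]
    (K : Submodule R (FractionRing R)) (hK : IsFracCanonical R (FractionRing R) K)
    (f : FractionRing R)
    (hgen : K = (1 : Submodule R (FractionRing R)) ⊔ Submodule.span R {f}) :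
    K ^ 2 = K ^ 3 ↔
      Nonempty ((↥K ⧸ Submodule.comap K.subtype (1 : Submodule R (FractionRing R)))
        ≃ₗ[R] (R ⧸ condIdeal R (FractionRing R) K)) := by
  set B := Subalgebra.toSubmodule (Algebra.adjoin R (K : Set (FractionRing R)))
  have h1K : 1 ≤ K := hK.2.1
  have h1B : 1 ≤ B := Submodule.one_le.mpr (Subalgebra.one_mem _)
  have hBfg : B.FG := Submodule.fg_toSubmodule_adjoin hK.1 hK.2.2.1
  obtain ⟨e⟩ := Submodule.nonempty_quotient_equiv_of_eq_sup_span_singleton hgen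
  calc K ^ 2 = K ^ 3 ↔ K * K = K * B := by
        rw [Submodule.sq_eq_pow_three_iff_sq_eq_adjoin h1K, Submodule.mul_toSubmodule_adjoin h1K, sq]
    _ ↔ 1 / K = 1 / B := (hK.one_div_eq_one_div_iff hK.1 h1K hBfg h1B).symm
    _ ↔ Submodule.comap (Algebra.linearMap R _) (1 / K) = condIdeal R _ K :=
        (Submodule.comap_algebraLinearMap_inj (Submodule.one_div_le_one h1K)
          (Submodule.one_div_le_one h1B)).symm
    _ ↔ _ := by
        rw [← Ideal.nonempty_quotient_linearEquiv_iff]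
        exact ⟨fun ⟨e'⟩ => ⟨e.trans e'⟩, fun ⟨e'⟩ => ⟨e.symm.trans e'⟩⟩

/-- Let `(R,m)` be a one-dimensional Cohen–Macaulay local ring with fractional canonical
ideal `K` of Cohen–Macaulay type `2`, written `K = R + Rf`.  Then `K² = K³` iff
`K/R ≅ R/𝔠` where `𝔠 = R : R[K]`. -/
theorem type_two_square_eq_cube_iff
    (R : Type*) [CommRing R] [IsNoetherianRing R] [IsLocalRing R]
    (hdim : ringKrullDim R = 1)
    (hCM : ∃ x ∈ maximalIdeal R, x ∈ nonZeroDivisors R)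
    (K : Submodule R (FractionRing R)) (hK : IsFracCanonical R (FractionRing R) K)
    (f : FractionRing R)
    (hgen : K = (1 : Submodule R (FractionRing R)) ⊔ Submodule.span R {f})
    (hf : f ∉ (1 : Submodule R (FractionRing R))) :
    K ^ 2 = K ^ 3 ↔
      Nonempty ((↥K ⧸ Submodule.comap K.subtype (1 : Submodule R (FractionRing R)))
        ≃ₗ[R] (R ⧸ condIdeal R (FractionRing R) K)) :=
  type_two_square_eq_cube_iff_general R K hK f hgen
end

section
/- With (R, m) a one-dimensional Cohen-Macaulay local ring having a canonical ideal I with principal reduction, fractional canonical ideal K, and 𝔠 = R:R[K]: suppose n ≥ 2, R is n-Goto, and v(R/𝔠) = 1. Then r(R) + n ≤ e₁(I) ≤ n·r(R), where e₁(I) is the first Hilbert coefficient of I. -/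
open IsLocalRing

/-! Because `K² = K³` and `1 ∈ K`, the algebra `R[K] = K²` is finitely generated and idempotent,
so Nakayama's lemma gives `1 ∉ 𝔪K`: the element `1` is part of a minimal system of `r` generators
of `K`. Hence `K/R` is generated by `r - 1` elements and killed by `𝔠`, which bounds its length by
`(r - 1) · ℓ(R/𝔠) = (r - 1) n`. Conversely `𝔪 (K/R) ≠ 0`, since otherwise `𝔪K ⊆ 𝔪`, so `𝔪 ⊆ 𝔠` and
`n ≤ 1`; therefore `ℓ(K/R) ≥ 1 + ℓ((K/R)/𝔪(K/R)) ≥ 1 + μ(K/R) ≥ μ(K) = r`. -/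

open IsLocalRing Submodule

lemma moduleLength_eq_length (R M : Type*) [Ring R] [AddCommGroup M] [Module R M] :
    moduleLength R M = Module.length R M := by
  rw [moduleLength, ← Module.coe_length, WithBot.unbotD_coe]

section Ring

variable {R M : Type*} [Ring R] [AddCommGroup M] [Module R M]

lemma Module.length_submodule_add_length_quotient (N : Submodule R M) :
    Module.length R N + Module.length R (M ⧸ N) = Module.length R M :=
  (Module.length_eq_add_of_exact N.subtype N.mkQ N.injective_subtype N.mkQ_surjective
    (LinearMap.exact_subtype_mkQ N)).symm

lemma Module.length_quotient_add_one_le {N : Submodule R M} (hN : N ≠ ⊥) :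
    Module.length R (M ⧸ N) + 1 ≤ Module.length R M := by
  have : Nontrivial N := nontrivial_iff_ne_bot.mpr hN
  rw [← Module.length_submodule_add_length_quotient N, add_comm]
  gcongr
  exact Order.one_le_iff_pos.mpr Module.length_pos

lemma exists_fin_succ_span_eq_top_of_quotient (x : M) {t : ℕ} {g : Fin t → M ⧸ span R {x}}
    (hg : span R (Set.range g) = ⊤) : ∃ g' : Fin (t + 1) → M, span R (Set.range g') = ⊤ := by
  choose g' hg' using fun i => (span R {x}).mkQ_surjective (g i)
  refine ⟨Fin.cons x g', ?_⟩
  rw [Fin.range_cons, span_insert, ← Submodule.map_mkQ_eq_top, map_span, ← Set.range_comp,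
    show (span R {x}).mkQ ∘ g' = g from funext hg', hg]

lemma exists_fin_span_eq_top_of_length_le {t : ℕ} (h : Module.length R M ≤ t) :
    ∃ g : Fin t → M, span R (Set.range g) = ⊤ := by
  induction t generalizing M with
  | zero =>
    have : Subsingleton M := Module.length_eq_zero_iff.mp (nonpos_iff_eq_zero.mp (mod_cast h))
    exact ⟨Fin.elim0, Subsingleton.elim _ _⟩
  | succ t ih =>
    rcases subsingleton_or_nontrivial M with hM | hM
    · exact ⟨0, Subsingleton.elim _ _⟩
    obtain ⟨x, hx⟩ := exists_ne (0 : M)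
    have hquot : Module.length R (M ⧸ span R {x}) ≤ t := by
      have := (Module.length_quotient_add_one_le (N := span R {x}) (by simpa using hx)).trans h
      exact (ENat.add_le_add_iff_right ENat.one_ne_top).mp (mod_cast this)
    obtain ⟨g, hg⟩ := ih hquot
    exact exists_fin_succ_span_eq_top_of_quotient x hg

end Ring

section CommRing

variable {R M : Type*} [CommRing R] [AddCommGroup M] [Module R M]

lemma Module.length_le_mul_of_le_annihilator {c : Ideal R} (hc : c ≤ Module.annihilator R M)
    {t : ℕ} {g : Fin t → M} (hg : span R (Set.range g) = ⊤) :
    Module.length R M ≤ t * Module.length R (R ⧸ c) := by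
  have hker : pi Set.univ (fun _ => c) ≤ LinearMap.ker (Fintype.linearCombination R g) := by
    intro a ha
    simp only [LinearMap.mem_ker, Fintype.linearCombination_apply]
    exact Finset.sum_eq_zero fun i _ => Module.mem_annihilator.mp (hc (ha i trivial)) (g i)
  let f := (pi Set.univ (fun _ => c)).liftQ _ hker ∘ₗ (quotientPi fun _ => c).symm.toLinearMap
  have hf : Function.Surjective f := by
    rw [← LinearMap.range_eq_top, LinearMap.range_comp_of_range_eq_top _ (LinearEquiv.range _),
      range_liftQ, Fintype.range_linearCombination, hg]
  calc Module.length R M ≤ Module.length R (Fin t → R ⧸ c) := Module.length_le_of_surjective f hf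
    _ = t * Module.length R (R ⧸ c) := by simp

lemma exists_fin_span_quotient_eq_top [IsLocalRing R] {x : M}
    (hx : x ∉ maximalIdeal R • (⊤ : Submodule R M)) {t : ℕ} {g : Fin (t + 1) → M}
    (hg : span R (Set.range g) = ⊤) :
    ∃ g' : Fin t → M ⧸ span R {x}, span R (Set.range g') = ⊤ := by
  obtain ⟨a, ha⟩ := (mem_span_range_iff_exists_fun R).mp (hg ▸ mem_top : x ∈ span R (Set.range g))
  obtain ⟨i, hi⟩ : ∃ i, a i ∉ maximalIdeal R := by
    by_contra! h
    exact hx (ha ▸ sum_mem fun i _ => smul_mem_smul (h i) mem_top)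
  set q := (span R {x}).mkQ
  refine ⟨fun j => q (g (i.succAbove j)), ?_⟩
  have hqx : q x = 0 := (Quotient.mk_eq_zero _).mpr (mem_span_singleton_self x)
  have hgi : q (g i) ∈ span R (Set.range fun j => q (g (i.succAbove j))) := by
    rw [← smul_mem_iff_of_isUnit _ (notMem_maximalIdeal.mp hi)]
    have : a i • q (g i) = - ∑ j, a (i.succAbove j) • q (g (i.succAbove j)) := by
      rw [eq_neg_iff_add_eq_zero, ← Fin.sum_univ_succAbove (fun k => a k • q (g k)) i]
      simp_rw [← map_smul, ← map_sum, ha, hqx]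
    rw [this]
    exact neg_mem (sum_mem fun j _ => smul_mem _ _ (subset_span ⟨j, rfl⟩))
  rw [eq_top_iff, ← range_mkQ (span R {x}), ← Submodule.map_top, ← hg, map_span, span_le]
  rintro _ ⟨_, ⟨k, rfl⟩, rfl⟩
  obtain rfl | ⟨j, rfl⟩ := Fin.eq_self_or_eq_succAbove i k
  · exact hgi
  · exact subset_span ⟨j, rfl⟩

lemma exists_fin_span_eq_top_of_length_quotient_le [IsLocalRing R] [Module.Finite R M] {t : ℕ}
    (h : Module.length R (M ⧸ maximalIdeal R • (⊤ : Submodule R M)) ≤ t) :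
    ∃ g : Fin t → M, span R (Set.range g) = ⊤ := by
  obtain ⟨g, hg⟩ := exists_fin_span_eq_top_of_length_le h
  choose g' hg' using fun i => mkQ_surjective _ (g i)
  refine ⟨g', IsLocalRing.map_mkQ_eq_top.mp ?_⟩
  rw [map_span, ← Set.range_comp, show _ ∘ g' = g from funext hg', hg]

lemma le_length_quotient_span_singleton [IsLocalRing R] [Module.Finite R M] {x : M}
    (hm : maximalIdeal R • (⊤ : Submodule R (M ⧸ span R {x})) ≠ ⊥) {r : ℕ}
    (hmin : ∀ t, (∃ g : Fin t → M, span R (Set.range g) = ⊤) → r ≤ t) :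
    r ≤ Module.length R (M ⧸ span R {x}) := by
  set P := M ⧸ span R {x}
  have hlen := Module.length_quotient_add_one_le hm
  cases h : Module.length R (P ⧸ maximalIdeal R • (⊤ : Submodule R P)) with
  | top =>
    rw [h, top_add] at hlen
    exact le_top.trans hlen
  | coe t =>
    obtain ⟨g, hg⟩ := exists_fin_span_eq_top_of_length_quotient_le h.le
    obtain ⟨g', hg'⟩ := exists_fin_succ_span_eq_top_of_quotient x hg
    calc (r : ℕ∞) ≤ (t + 1 : ℕ) := mod_cast hmin _ ⟨g', hg'⟩
      _ ≤ _ := by rw [h] at hlen; exact_mod_cast hlen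

lemma Module.length_quotient_le_one_of_maximalIdeal_le [IsLocalRing R] {c : Ideal R}
    (hc : maximalIdeal R ≤ c) : Module.length R (R ⧸ c) ≤ 1 := by
  have : IsSimpleModule R (R ⧸ maximalIdeal R) :=
    isSimpleModule_iff_isCoatom.mpr (Ideal.isMaximal_def.mp (maximalIdeal.isMaximal R))
  calc Module.length R (R ⧸ c) ≤ Module.length R (R ⧸ maximalIdeal R) :=
        Module.length_le_of_surjective (factor hc) (factor_surjective hc)
    _ = 1 := Module.length_eq_one R _

end CommRing

section FractionalIdeal

variable {R Q : Type*} [CommRing R] [CommRing Q] [Algebra R Q] {K : Submodule R Q}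

lemma exists_fin_eq_span_iff {t : ℕ} :
    (∃ g : Fin t → Q, K = span R (Set.range g)) ↔ ∃ g : Fin t → K, span R (Set.range g) = ⊤ := by
  have key (g : Fin t → K) :
      span R (Set.range g) = ⊤ ↔ span R (Set.range (K.subtype ∘ g)) = K := by
    rw [Set.range_comp, ← map_span, ← (map_injective_of_injective K.injective_subtype).eq_iff,
      map_subtype_top]
  constructor
  · rintro ⟨g, rfl⟩
    exact ⟨fun i => ⟨g i, subset_span ⟨i, rfl⟩⟩, (key _).mpr rfl⟩
  · rintro ⟨g, hg⟩
    exact ⟨K.subtype ∘ g, ((key g).mp hg).symm⟩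

lemma comap_subtype_one_eq_span (hK : 1 ≤ K) :
    comap K.subtype 1 = span R {⟨1, one_le.mp hK⟩} := by
  ext y
  simp only [mem_comap, subtype_apply, one_eq_span, mem_span_singleton, Subtype.ext_iff,
    SetLike.val_smul]

lemma smul_mul_le_smul_mul (I : Ideal R) (M N : Submodule R Q) : (I • M) * N ≤ I • (M * N) := by
  rw [mul_le]
  intro x hx y hy
  refine smul_induction_on hx (fun a ha m hm => ?_) (fun _ _ h₁ h₂ => ?_)
  · rw [smul_mul_assoc]
    exact smul_mem_smul ha (mul_mem_mul hm hy)
  · rw [add_mul]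
    exact add_mem h₁ h₂

lemma one_notMem_maximalIdeal_smul [IsLocalRing R] [Nontrivial Q] (hFG : K.FG) (hK : 1 ≤ K)
    (hsq : K ^ 2 = K ^ 3) : (1 : Q) ∉ maximalIdeal R • K := by
  intro h1
  have hidem : K ^ 2 * K ^ 2 = K ^ 2 := by
    rw [← pow_add, show 2 + 2 = 3 + 1 by rfl, pow_succ, ← hsq, ← pow_succ, ← hsq]
  have hKsq : K ≤ K ^ 2 := by simpa [sq] using mul_le_mul' (le_refl K) hK
  have hle : K ^ 2 ≤ maximalIdeal R • K ^ 2 := by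
    have h1' : (1 : Q) ∈ maximalIdeal R • K ^ 2 := smul_mono_right _ hKsq h1
    intro y hy
    simpa [hidem] using smul_mul_le_smul_mul _ _ _ (mul_mem_mul h1' hy)
  have hbot := eq_bot_of_le_smul_of_le_jacobson_bot _ _ (hFG.pow 2) hle
    (jacobson_eq_maximalIdeal ⊥ bot_ne_top).ge
  have h1sq : (1 : Q) ∈ K ^ 2 := Submodule.one_le.mp (hK.trans hKsq)
  simp [hbot] at h1sq

lemma condIdeal_le_annihilator :
    condIdeal R Q K ≤ Module.annihilator R (K ⧸ comap K.subtype 1) := by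
  intro a ha
  rw [Module.mem_annihilator]
  intro x
  obtain ⟨y, rfl⟩ := mkQ_surjective _ x
  rw [← map_smul, mkQ_apply, Quotient.mk_eq_zero, mem_comap, subtype_apply, SetLike.val_smul,
    Algebra.smul_def]
  exact (mem_div_iff_forall_mul_mem.mp ha) y (Algebra.subset_adjoin y.2)

lemma maximalIdeal_le_condIdeal [IsLocalRing R] (h1 : (1 : Q) ∉ maximalIdeal R • K)
    (hm : maximalIdeal R ≤ Module.annihilator R (K ⧸ comap K.subtype 1)) :
    maximalIdeal R ≤ condIdeal R Q K := by
  set T : Submodule R Q := Submodule.map (Algebra.linearMap R Q) (maximalIdeal R)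
  -- `𝔪K ⊆ R`, and a unit in `𝔪K` would put `1` in `𝔪K`; so `𝔪K ⊆ 𝔪`, and then `𝔪 R[K] ⊆ 𝔪`.
  have hKT : ∀ a ∈ maximalIdeal R, ∀ k ∈ K, a • k ∈ T := by
    intro a ha k hk
    have hak : a • (⟨k, hk⟩ : K) ∈ comap K.subtype 1 := by
      rw [← Quotient.mk_eq_zero, Quotient.mk_smul]
      exact Module.mem_annihilator.mp (hm ha) _
    rw [mem_comap, one_eq_range] at hak
    obtain ⟨b, hb⟩ := hak
    by_cases hbm : b ∈ maximalIdeal R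
    · exact ⟨b, hbm, hb⟩
    obtain ⟨u, rfl⟩ := notMem_maximalIdeal.mp hbm
    refine absurd ?_ h1
    have : (1 : Q) = a • ((u⁻¹ : Rˣ) • k) := by
      rw [smul_comm, show a • k = K.subtype (a • ⟨k, hk⟩) from rfl, ← hb, Algebra.linearMap_apply,
        Algebra.algebraMap_eq_smul_one, ← Units.smul_def, inv_smul_smul]
    rw [this]
    exact smul_mem_smul ha (K.smul_mem _ hk)
  have hAT : ∀ s ∈ Algebra.adjoin R (K : Set Q), ∀ t ∈ T, s * t ∈ T := by
    intro s hs
    induction hs using Algebra.adjoin_induction with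
    | mem k hk =>
      rintro _ ⟨a, ha, rfl⟩
      rw [Algebra.linearMap_apply, ← Algebra.commutes, ← Algebra.smul_def]
      exact hKT a ha k hk
    | algebraMap r =>
      intro t ht
      rw [← Algebra.smul_def]
      exact T.smul_mem r ht
    | add x y _ _ hx hy =>
      intro t ht
      rw [add_mul]
      exact add_mem (hx t ht) (hy t ht)
    | mul x y _ _ hx hy =>
      intro t ht
      rw [mul_assoc]
      exact hx _ (hy t ht)
  have hT1 : T ≤ 1 := by
    rw [one_eq_range, LinearMap.range_eq_map]
    exact map_mono le_top
  intro a ha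
  refine mem_div_iff_forall_mul_mem.mpr fun s hs => ?_
  rw [mul_comm]
  exact hT1 (hAT s hs _ ⟨a, ha, rfl⟩)

lemma length_quotient_one_le_mul [IsLocalRing R] (hK : 1 ≤ K)
    (h1 : (1 : Q) ∉ maximalIdeal R • K) {t : ℕ}
    (hgen : ∃ g : Fin (t + 1) → Q, K = span R (Set.range g)) :
    Module.length R (K ⧸ comap K.subtype 1) ≤ t * Module.length R (R ⧸ condIdeal R Q K) := by
  obtain ⟨g, hg⟩ := exists_fin_eq_span_iff.mp hgen
  have hone : (⟨1, one_le.mp hK⟩ : K) ∉ maximalIdeal R • (⊤ : Submodule R K) := fun h =>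
    h1 (by simpa [map_smul'', map_subtype_top] using mem_map_of_mem (f := K.subtype) h)
  obtain ⟨g', hg'⟩ := exists_fin_span_quotient_eq_top hone hg
  have hc := condIdeal_le_annihilator (K := K)
  rw [comap_subtype_one_eq_span hK] at hc ⊢
  exact Module.length_le_mul_of_le_annihilator hc hg'

lemma le_length_quotient_one [IsLocalRing R] (hFG : K.FG) (hK : 1 ≤ K)
    (h1 : (1 : Q) ∉ maximalIdeal R • K) (hc : 1 < Module.length R (R ⧸ condIdeal R Q K)) {r : ℕ}
    (hmin : ∀ t, (∃ g : Fin t → Q, K = span R (Set.range g)) → r ≤ t) :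
    r ≤ Module.length R (K ⧸ comap K.subtype 1) := by
  have : Module.Finite R K := Module.Finite.iff_fg.mpr hFG
  have hm : ¬ maximalIdeal R ≤ Module.annihilator R (K ⧸ comap K.subtype 1) := fun hm =>
    (Module.length_quotient_le_one_of_maximalIdeal_le (maximalIdeal_le_condIdeal h1 hm)).not_gt hc
  rw [← annihilator_top, le_annihilator_iff, comap_subtype_one_eq_span hK] at hm
  rw [comap_subtype_one_eq_span hK]
  exact le_length_quotient_span_singleton hm fun t ht => hmin t (exists_fin_eq_span_iff.mpr ht)

end FractionalIdeal

theorem goto_first_hilbert_coefficient_bounds_general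
    (R : Type*) [CommRing R] [IsLocalRing R]
    (K : Submodule R (FractionRing R)) (hK : IsFracCanonical R (FractionRing R) K)
    (n : ℕ) (hn : 2 ≤ n)
    (hsq : K ^ 2 = K ^ 3)
    (hlen : moduleLength R (R ⧸ condIdeal R (FractionRing R) K) = n)
    (r : ℕ)
    (hrgen : ∃ g : Fin r → FractionRing R, K = Submodule.span R (Set.range g))
    (hrmin : ∀ m : ℕ, m < r →
      ¬ ∃ g : Fin m → FractionRing R, K = Submodule.span R (Set.range g)) :
    ((r + n : ℕ) : ℕ∞) ≤
        moduleLength R (↥K ⧸ Submodule.comap K.subtype (1 : Submodule R (FractionRing R))) +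
          (n : ℕ∞) ∧
      moduleLength R (↥K ⧸ Submodule.comap K.subtype (1 : Submodule R (FractionRing R))) +
          (n : ℕ∞) ≤ ((n * r : ℕ) : ℕ∞) := by
  obtain ⟨hFG, hK1, -, -⟩ := hK
  have h1 := one_notMem_maximalIdeal_smul hFG hK1 hsq
  rw [moduleLength_eq_length] at hlen ⊢
  obtain _ | r := r
  · obtain ⟨g, rfl⟩ := hrgen
    simpa using one_le.mp hK1
  have hlower := le_length_quotient_one hFG hK1 h1 (by rw [hlen]; exact_mod_cast hn)
    fun t ht => not_lt.mp fun hlt => hrmin t hlt ht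
  have hupper := length_quotient_one_le_mul hK1 h1 hrgen
  rw [hlen] at hupper
  constructor
  · push_cast
    gcongr
    exact_mod_cast hlower
  · calc _ ≤ (r * n : ℕ∞) + n := by gcongr
      _ = _ := by push_cast; ring

/-- For an `n`-Goto one-dimensional CM local ring `R` (`n ≥ 2`) with `v(R/𝔠) = 1`,
one has `r(R) + n ≤ e₁(I) ≤ n · r(R)`, where `e₁(I) = ℓ_R(K/R) + n` is the first
Hilbert coefficient of the canonical ideal and `r = r(R) = μ_R(K)` the CM type. -/
theorem goto_first_hilbert_coefficient_bounds
    (R : Type*) [CommRing R] [IsNoetherianRing R] [IsLocalRing R]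
    (hdim : ringKrullDim R = 1)
    (hCM : ∃ x ∈ maximalIdeal R, x ∈ nonZeroDivisors R)
    (K : Submodule R (FractionRing R)) (hK : IsFracCanonical R (FractionRing R) K)
    (n : ℕ) (hn : 2 ≤ n)
    (hsq : K ^ 2 = K ^ 3)
    (hlen : moduleLength R (R ⧸ condIdeal R (FractionRing R) K) = n)
    (hv : ∃ x : R, maximalIdeal R ≤ condIdeal R (FractionRing R) K ⊔ Ideal.span {x})
    (r : ℕ)
    (hrgen : ∃ g : Fin r → FractionRing R, K = Submodule.span R (Set.range g))
    (hrmin : ∀ m : ℕ, m < r →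
      ¬ ∃ g : Fin m → FractionRing R, K = Submodule.span R (Set.range g)) :
    ((r + n : ℕ) : ℕ∞) ≤
        moduleLength R (↥K ⧸ Submodule.comap K.subtype (1 : Submodule R (FractionRing R))) +
          (n : ℕ∞) ∧
      moduleLength R (↥K ⧸ Submodule.comap K.subtype (1 : Submodule R (FractionRing R))) +
          (n : ℕ∞) ≤ ((n * r : ℕ) : ℕ∞) :=
  goto_first_hilbert_coefficient_bounds_general R K hK n hn hsq hlen r hrgen hrmin
end

section
/- Let A = S/(Z² − XY) where S = k[[X,Y,Z]] is a power series ring over a field k, and 𝔭 = (x, z) the image prime ideal. Then 𝔭 has no principal reduction: there is no a ∈ 𝔭 with 𝔭^{r+1} = a·𝔭^r for some r ≥ 0. -/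
/-!
A ring map `Ψ : A → k⟦t⟧` that sends `𝔭` onto a nonzero principal ideal `(s)` turns
`𝔭^{r+1} = a 𝔭^r` into `(s)^{r+1} = (Ψ a)(s)^r`, hence `Ψ a ∣ s` after cancelling `s^r`.
Such maps come from arcs `(x, y, z) ↦ (u, v, w)`, `u, v, w ∈ t k⟦t⟧`, on the cone `w² = uv`.
Write `a = f x + g z`. The arc `(t⁴, t², t³)` has `s = t³` and `Ψ a = t³ (t Ψf + Ψg)`, so
`g(0) ≠ 0`. Then the arc `(t², d²t², dt²)` with `f(0) + d g(0) = 0` has `s = t²`, while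
`t³ ∣ t² (Ψf + d Ψg) = Ψ a`.
-/

open PowerSeries

theorem Ideal.dvd_of_pow_succ_eq_span_singleton_mul_pow {R S : Type*} [CommRing R]
    [CommRing S] [IsDomain S] (Ψ : R →+* S) {I : Ideal R} {s : S} (hs : s ≠ 0)
    (hI : I.map Ψ = Ideal.span {s}) {a : R} {r : ℕ}
    (h : I ^ (r + 1) = Ideal.span {a} * I ^ r) : Ψ a ∣ s := by
  have h' := congrArg (Ideal.map Ψ) h
  rw [Ideal.map_mul, Ideal.map_pow, Ideal.map_pow, hI, Ideal.map_span, Set.image_singleton,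
    Ideal.span_singleton_pow, Ideal.span_singleton_pow, Ideal.span_singleton_mul_span_singleton,
    Ideal.span_singleton_eq_span_singleton] at h'
  rw [← mul_dvd_mul_iff_right (pow_ne_zero r hs), ← pow_succ']
  exact h'.symm.dvd

theorem MvPowerSeries.constantCoeff_subst_of_constantCoeff_eq_zero {σ τ R : Type*} [Finite σ]
    [CommRing R] {a : σ → MvPowerSeries τ R} (ha : ∀ i, constantCoeff (a i) = 0)
    (f : MvPowerSeries σ R) : constantCoeff (subst a f) = constantCoeff f := by
  have hsub := hasSubst_of_constantCoeff_zero ha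
  have hf : constantCoeff (f - C (constantCoeff f)) = 0 := by simp
  have := constantCoeff_subst_eq_zero hsub ha hf
  rwa [subst_sub hsub, subst_C, map_sub, constantCoeff_C, sub_eq_zero] at this

namespace QuadricCone

variable {k : Type*} [Field k]

noncomputable abbrev equation (k : Type*) [Field k] : MvPowerSeries (Fin 3) k :=
  MvPowerSeries.X 2 ^ 2 - MvPowerSeries.X 0 * MvPowerSeries.X 1

noncomputable abbrev ConeRing (k : Type*) [Field k] :=
  MvPowerSeries (Fin 3) k ⧸ Ideal.span {equation k}

noncomputable abbrev conePrime (k : Type*) [Field k] : Ideal (ConeRing k) :=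
  Ideal.span {Ideal.Quotient.mk _ (MvPowerSeries.X 0), Ideal.Quotient.mk _ (MvPowerSeries.X 2)}

section coneLift

variable {x y z : k⟦X⟧}

theorem constantCoeff_vec_eq_zero (hx : constantCoeff x = 0) (hy : constantCoeff y = 0)
    (hz : constantCoeff z = 0) : ∀ i, MvPowerSeries.constantCoeff (![x, y, z] i) = 0 := by
  simp [Fin.forall_fin_succ, ← constantCoeff_eq, hx, hy, hz]

noncomputable def coneLift (x y z : k⟦X⟧) (hx : constantCoeff x = 0)
    (hy : constantCoeff y = 0) (hz : constantCoeff z = 0) (hcone : z ^ 2 = x * y) :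
    ConeRing k →+* k⟦X⟧ :=
  Ideal.Quotient.lift _ (MvPowerSeries.substAlgHom (R := k)
    (MvPowerSeries.hasSubst_of_constantCoeff_zero (constantCoeff_vec_eq_zero hx hy hz)))
    fun f hf => by
      obtain ⟨g, rfl⟩ := Ideal.mem_span_singleton'.mp hf
      simp only [RingHom.coe_coe, map_mul, map_sub, map_pow, MvPowerSeries.substAlgHom_X,
        Matrix.cons_val, hcone, sub_self, mul_zero]

variable {hx : constantCoeff x = 0} {hy : constantCoeff y = 0} {hz : constantCoeff z = 0}
  {hcone : z ^ 2 = x * y}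

theorem coneLift_mk (f : MvPowerSeries (Fin 3) k) :
    coneLift x y z hx hy hz hcone (Ideal.Quotient.mk _ f) = MvPowerSeries.subst ![x, y, z] f := by
  simp [coneLift]

theorem coneLift_mk_X_zero :
    coneLift x y z hx hy hz hcone (Ideal.Quotient.mk _ (MvPowerSeries.X 0)) = x := by
  rw [coneLift_mk, MvPowerSeries.subst_X (MvPowerSeries.hasSubst_of_constantCoeff_zero
    (constantCoeff_vec_eq_zero hx hy hz))]
  rfl

theorem coneLift_mk_X_two :
    coneLift x y z hx hy hz hcone (Ideal.Quotient.mk _ (MvPowerSeries.X 2)) = z := by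
  rw [coneLift_mk, MvPowerSeries.subst_X (MvPowerSeries.hasSubst_of_constantCoeff_zero
    (constantCoeff_vec_eq_zero hx hy hz))]
  rfl

theorem constantCoeff_coneLift_mk (f : MvPowerSeries (Fin 3) k) :
    constantCoeff (coneLift x y z hx hy hz hcone (Ideal.Quotient.mk _ f)) =
      MvPowerSeries.constantCoeff f := by
  rw [coneLift_mk, constantCoeff_eq,
    MvPowerSeries.constantCoeff_subst_of_constantCoeff_eq_zero (constantCoeff_vec_eq_zero hx hy hz)]

theorem not_X_pow_succ_dvd_coneLift_of_reduction {m : ℕ}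
    (hspan : Ideal.span {x, z} = Ideal.span {(X : k⟦X⟧) ^ m}) {b : ConeRing k} {r : ℕ}
    (h : conePrime k ^ (r + 1) = Ideal.span {b} * conePrime k ^ r) :
    ¬ X ^ (m + 1) ∣ coneLift x y z hx hy hz hcone b := by
  intro hdvd
  have hmap : (conePrime k).map (coneLift x y z hx hy hz hcone) = Ideal.span {X ^ m} := by
    rw [Ideal.map_span, Set.image_pair, coneLift_mk_X_zero, coneLift_mk_X_two, hspan]
  have hb := Ideal.dvd_of_pow_succ_eq_span_singleton_mul_pow _ (pow_ne_zero m X_ne_zero) hmap h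
  have := (pow_dvd_pow_iff X_ne_zero X_prime.not_isUnit).mp (hdvd.trans hb)
  omega

end coneLift

variable {f g : MvPowerSeries (Fin 3) k} {r : ℕ}

theorem constantCoeff_ne_zero_of_reduction
    (h : conePrime k ^ (r + 1) = Ideal.span {Ideal.Quotient.mk _ f *
      Ideal.Quotient.mk _ (MvPowerSeries.X 0) + Ideal.Quotient.mk _ g *
      Ideal.Quotient.mk _ (MvPowerSeries.X 2)} * conePrime k ^ r) :
    MvPowerSeries.constantCoeff g ≠ 0 := by
  intro hg
  refine not_X_pow_succ_dvd_coneLift_of_reduction (x := X ^ 4) (y := X ^ 2) (z := X ^ 3)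
    (hx := by simp) (hy := by simp) (hz := by simp) (hcone := by ring) (m := 3) ?_ h ?_
  · exact Submodule.span_insert_eq_span
      (Ideal.mem_span_singleton.mpr (pow_dvd_pow X (by norm_num)))
  · obtain ⟨q, hq⟩ := X_dvd_iff.mpr ((constantCoeff_coneLift_mk g).trans hg)
    rw [map_add, map_mul, map_mul, coneLift_mk_X_zero, coneLift_mk_X_two, hq]
    exact dvd_add (dvd_mul_left _ _) ⟨q, by ring⟩

theorem false_of_reduction_of_constantCoeff_ne_zero (hg : MvPowerSeries.constantCoeff g ≠ 0)
    (h : conePrime k ^ (r + 1) = Ideal.span {Ideal.Quotient.mk _ f *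
      Ideal.Quotient.mk _ (MvPowerSeries.X 0) + Ideal.Quotient.mk _ g *
      Ideal.Quotient.mk _ (MvPowerSeries.X 2)} * conePrime k ^ r) : False := by
  obtain ⟨d, hd⟩ : ∃ d, MvPowerSeries.constantCoeff f + d * MvPowerSeries.constantCoeff g = 0 :=
    ⟨-MvPowerSeries.constantCoeff f / MvPowerSeries.constantCoeff g, by field_simp; ring⟩
  have hx : constantCoeff (X ^ 2 : k⟦X⟧) = 0 := by simp
  have hy : constantCoeff (C d ^ 2 * X ^ 2 : k⟦X⟧) = 0 := by simp
  have hz : constantCoeff (C d * X ^ 2 : k⟦X⟧) = 0 := by simp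
  have hcone : (C d * X ^ 2 : k⟦X⟧) ^ 2 = X ^ 2 * (C d ^ 2 * X ^ 2) := by ring
  refine not_X_pow_succ_dvd_coneLift_of_reduction (hx := hx) (hy := hy) (hz := hz)
    (hcone := hcone) (m := 2) ?_ h ?_
  · rw [Set.pair_comm]
    exact Submodule.span_insert_eq_span
      (Ideal.mul_mem_left _ _ (Ideal.mem_span_singleton_self _))
  · obtain ⟨q, hq⟩ : X ∣ coneLift _ _ _ hx hy hz hcone (Ideal.Quotient.mk _ f) +
        C d * coneLift _ _ _ hx hy hz hcone (Ideal.Quotient.mk _ g) := by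
      rwa [X_dvd_iff, map_add, map_mul, constantCoeff_coneLift_mk, constantCoeff_coneLift_mk,
        constantCoeff_C]
    rw [map_add, map_mul, map_mul, coneLift_mk_X_zero, coneLift_mk_X_two]
    exact ⟨q, by linear_combination X ^ 2 * hq⟩

end QuadricCone

/-- In `A = k[[X,Y,Z]]/(Z² − XY)`, the prime `𝔭 = (x, z)` admits no principal
reduction: there is no `a ∈ 𝔭` with `𝔭^{r+1} = a·𝔭^r` for some `r ≥ 0`. -/
theorem quadric_cone_prime_no_principal_reduction
    (k : Type*) [Field k]
    (P : MvPowerSeries (Fin 3) k)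
    (hP : P = (MvPowerSeries.X 2 : MvPowerSeries (Fin 3) k) ^ 2 -
      MvPowerSeries.X 0 * MvPowerSeries.X 1)
    (𝔭 : Ideal (MvPowerSeries (Fin 3) k ⧸ Ideal.span {P}))
    (h𝔭 : 𝔭 = Ideal.span {Ideal.Quotient.mk (Ideal.span {P}) (MvPowerSeries.X 0),
      Ideal.Quotient.mk (Ideal.span {P}) (MvPowerSeries.X 2)}) :
    ¬ ∃ a ∈ 𝔭, ∃ r : ℕ, 𝔭 ^ (r + 1) = Ideal.span {a} * 𝔭 ^ r := by
  rintro ⟨a, ha, r, h⟩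
  subst hP h𝔭
  obtain ⟨u, v, rfl⟩ := Ideal.mem_span_pair.mp ha
  obtain ⟨f, rfl⟩ := Ideal.Quotient.mk_surjective u
  obtain ⟨g, rfl⟩ := Ideal.Quotient.mk_surjective v
  exact QuadricCone.false_of_reduction_of_constantCoeff_ne_zero
    (QuadricCone.constantCoeff_ne_zero_of_reduction h) h
end
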